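/- arXiv:2602.11906 — 3 statements merged into one kernel-verified Lean document; each statement's English description precedes it below -/
import Mathlib

section
/- Let θ be a ternary relation on ℕ and a, b, k ∈ ℕ. Let X₀ < X₁ < ⋯ < X_{k−1} be pairwise θ-apart ω^a-large*(θ) finite sets such that the set {max X_s : s < k} is ω^{⌊a/2⌋+2b}-large*(θ). Then ⋃_{s<k} X_s is ω^{a+b}-large*(θ). -/
/-- The minimum of a finite set of naturals (`0` if empty). -/
noncomputable def minN (X : Finset ℕ) : ℕ := sInf (X : Set ℕ)

/-- The maximum of a finite set of naturals (`0` if empty). -/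
def maxN (X : Finset ℕ) : ℕ := X.sup id

/-- `E` lies entirely below `F`. -/
def SetBelow (E F : Finset ℕ) : Prop := ∀ x ∈ E, ∀ y ∈ F, x < y

/-- `E` and `F` are `θ`-apart: for every `x < max E` there is `y < min F`
with `θ x y z` for all `z < max F`. -/
def ThetaApart (θ : ℕ → ℕ → ℕ → Prop) (E F : Finset ℕ) : Prop :=
  ∀ x < maxN E, ∃ y < minN F, ∀ z < maxN F, θ x y z

/-- `L·k`: finite sets containing `k` pairwise `θ`-apart members `X₀ < ⋯ < X_{k-1}` of `L`. -/
def MulK (θ : ℕ → ℕ → ℕ → Prop) (L : Set (Finset ℕ)) (k : ℕ) : Set (Finset ℕ) :=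
  {F | ∃ X : Fin k → Finset ℕ, (∀ i, X i ∈ L) ∧ (∀ i, X i ⊆ F) ∧
    ∀ i j, i < j → SetBelow (X i) (X j) ∧ ThetaApart θ (X i) (X j)}

/-- `L·σ` for a finite sequence `σ`: `L·ε = L`, `L·(k⌢τ) = (L·k)·τ`. -/
def MulSeq (θ : ℕ → ℕ → ℕ → Prop) (L : Set (Finset ℕ)) : List ℕ → Set (Finset ℕ)
  | [] => L
  | k :: τ => MulSeq θ (MulK θ L k) τ

/-- `L^θ_n`: the `ω^n`-large*(θ) finite sets. -/
noncomputable def LargeStar (θ : ℕ → ℕ → ℕ → Prop) : ℕ → Set (Finset ℕ)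
  | 0 => {X | X.Nonempty}
  | n + 1 => {X | X.Nonempty ∧
      X.erase (minN X) ∈ MulSeq θ (LargeStar θ n) (List.replicate (n + 1) (minN X))}

/-- `ω^n`-largeness(θ) (the non-starred notion). -/
noncomputable def LargeTheta (θ : ℕ → ℕ → ℕ → Prop) : ℕ → Set (Finset ℕ)
  | 0 => {X | X.Nonempty}
  | n + 1 => {X | X.Nonempty ∧ X.erase (minN X) ∈ MulK θ (LargeTheta θ n) (minN X)}

/-- `L·k` without θ-apartness (plain largeness product). -/
def MulKPlain (L : Set (Finset ℕ)) (k : ℕ) : Set (Finset ℕ) :=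
  {F | ∃ X : Fin k → Finset ℕ, (∀ i, X i ∈ L) ∧ (∀ i, X i ⊆ F) ∧
    ∀ i j, i < j → SetBelow (X i) (X j)}

/-- Ketonen–Solovay `ω^n`-largeness (no θ). -/
noncomputable def LargePlain : ℕ → Set (Finset ℕ)
  | 0 => {X | X.Nonempty}
  | n + 1 => {X | X.Nonempty ∧ X.erase (minN X) ∈ MulKPlain (LargePlain n) (minN X)}

/-- `g`-sparsity. -/
def GSparse (g : ℕ → ℕ) (X : Finset ℕ) : Prop := ∀ x ∈ X, ∀ y ∈ X, x < y → g x < y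

/-- exp-sparsity. -/
def ExpSparse (X : Finset ℕ) : Prop := ∀ x ∈ X, ∀ y ∈ X, x < y → 4 ^ x < y

/-- `ω^k`-sparsity. -/
def OmegaSparse (k : ℕ) (X : Finset ℕ) : Prop :=
  ∀ x ∈ X, ∀ y ∈ X, x < y → Finset.Ioc x y ∈ LargePlain k

/-! Induction on `b`, simultaneously for all subfamilies `(X s)_{s ∈ S}`. For a set `Z` of
maxima of the subfamily let `blockUnion Z` be the union of the `X s` whose maximum lies in
`Z ∖ {min Z}`. Because the `X s` are increasing and pairwise θ-apart, `blockUnion` carries `<`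
and θ-apartness of sets of maxima over to their images; hence it turns a witness of
`Z ∈ L·(q, …, q)` into a witness of `blockUnion Z ∈ L'·(m, …, m)` for every `m ≤ q`, provided it
maps the leaves from `L` into `L'`. With `c = ⌊a/2⌋ + 2b`, a leaf `W` with `W ∖ {min W}`
`ω^c`-large has an `ω^(a+b)`-large image by the induction hypothesis. An `ω^(c+2)`-large set of
maxima `M` provides `c + 2` levels through `M ∖ {min M}`, and each `ω^(c+1)`-large leaf up to `c`
more; since `a + b ≤ 2c + 1` this covers the `a + b + 1` levels needed for `ω^(a+b+1)`. -/

lemma minN_mem {X : Finset ℕ} (h : X.Nonempty) : minN X ∈ X :=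
  Nat.sInf_mem (Finset.coe_nonempty.2 h)

lemma minN_le {X : Finset ℕ} {x : ℕ} (hx : x ∈ X) : minN X ≤ x :=
  Nat.sInf_le (Finset.mem_coe.2 hx)

lemma le_maxN {X : Finset ℕ} {x : ℕ} (hx : x ∈ X) : x ≤ maxN X :=
  Finset.le_sup (f := id) hx

lemma maxN_mem {X : Finset ℕ} (h : X.Nonempty) : maxN X ∈ X := by
  obtain ⟨x, hx, hmax⟩ := Finset.exists_mem_eq_sup X h id
  rw [maxN, hmax]
  exact hx

lemma maxN_le {X : Finset ℕ} {n : ℕ} (h : ∀ x ∈ X, x ≤ n) : maxN X ≤ n :=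
  Finset.sup_le h

section Products

variable {θ : ℕ → ℕ → ℕ → Prop} {L L' : Set (Finset ℕ)}

lemma mulSeq_append (σ τ : List ℕ) (L : Set (Finset ℕ)) :
    MulSeq θ L (σ ++ τ) = MulSeq θ (MulSeq θ L σ) τ := by
  induction σ generalizing L with
  | nil => rfl
  | cons k σ ih => exact ih (MulK θ L k)

lemma mulSeq_replicate_add (i j k : ℕ) :
    MulSeq θ L (List.replicate (i + j) k) =
      MulSeq θ (MulSeq θ L (List.replicate i k)) (List.replicate j k) := by
  rw [List.replicate_add, mulSeq_append]

lemma mulSeq_replicate_succ (j k : ℕ) :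
    MulSeq θ L (List.replicate (j + 1) k) = MulK θ (MulSeq θ L (List.replicate j k)) k := by
  rw [mulSeq_replicate_add]
  rfl

lemma isUpperSet_mulK (k : ℕ) : IsUpperSet (MulK θ L k) := by
  rintro F F' hFF' ⟨Y, hY, hYF, hYY⟩
  exact ⟨Y, hY, fun i => (hYF i).trans hFF', hYY⟩

lemma IsUpperSet.mulSeq (hL : IsUpperSet L) (σ : List ℕ) : IsUpperSet (MulSeq θ L σ) := by
  induction σ generalizing L with
  | nil => exact hL
  | cons k σ ih => exact ih (isUpperSet_mulK k)

lemma mulK_mono (hL : L ⊆ L') {k k' : ℕ} (hk : k' ≤ k) : MulK θ L k ⊆ MulK θ L' k' := by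
  rintro F ⟨Y, hY, hYF, hYY⟩
  exact ⟨fun i => Y (Fin.castLE hk i), fun i => hL (hY _), fun i => hYF _,
    fun i j hij => hYY _ _ hij⟩

lemma mulSeq_replicate_mono (hL : L ⊆ L') {k k' : ℕ} (hk : k' ≤ k) (j : ℕ) :
    MulSeq θ L (List.replicate j k) ⊆ MulSeq θ L' (List.replicate j k') := by
  induction j generalizing L L' with
  | zero => exact hL
  | succ j ih => exact ih (mulK_mono hL hk)

lemma mulSeq_replicate_subset (hL : IsUpperSet L) {k : ℕ} (hk : 1 ≤ k) (j : ℕ) :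
    MulSeq θ L (List.replicate j k) ⊆ L := by
  induction j with
  | zero => exact subset_rfl
  | succ j ih =>
    rw [mulSeq_replicate_succ]
    rintro F ⟨Y, hY, hYF, -⟩
    exact hL (hYF ⟨0, hk⟩) (ih (hY _))

lemma nonempty_of_mem_mulSeq_replicate (hL : ∀ F ∈ L, F.Nonempty) {k : ℕ} (hk : 1 ≤ k)
    (j : ℕ) {F : Finset ℕ} (hF : F ∈ MulSeq θ L (List.replicate j k)) : F.Nonempty := by
  induction j generalizing F with
  | zero => exact hL F hF
  | succ j ih =>
    rw [mulSeq_replicate_succ] at hF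
    obtain ⟨Y, hY, hYF, -⟩ := hF
    exact (ih (hY ⟨0, hk⟩)).mono (hYF _)

-- `min F` lies in at most the first of the (at least two) disjoint witnesses.
lemma erase_minN_mem_of_mem_mulK (hL : IsUpperSet L) {k : ℕ} (hk : 2 ≤ k) {F : Finset ℕ}
    (hF : F ∈ MulK θ L k) : F.erase (minN F) ∈ L := by
  obtain ⟨Y, hY, hYF, hYY⟩ := hF
  by_cases hmin : minN F ∈ Y ⟨0, by omega⟩
  · refine hL (fun y hy => Finset.mem_erase.2 ⟨?_, hYF _ hy⟩) (hY ⟨1, hk⟩)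
    exact ((hYY _ _ (by simp [Fin.lt_def])).1 _ hmin _ hy).ne'
  · exact hL (fun y hy => Finset.mem_erase.2 ⟨fun h => hmin (h ▸ hy), hYF _ hy⟩) (hY _)

lemma erase_minN_mem_of_mem_mulSeq_replicate (hL : IsUpperSet L) {j k : ℕ} (hk : 2 ≤ k)
    {F : Finset ℕ} (hF : F ∈ MulSeq θ L (List.replicate (j + 1) k)) :
    F.erase (minN F) ∈ L := by
  rw [mulSeq_replicate_succ] at hF
  exact mulSeq_replicate_subset hL (by omega) j
    (erase_minN_mem_of_mem_mulK (hL.mulSeq _) hk hF)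

lemma largeStar_nonempty {n : ℕ} {X : Finset ℕ} (hX : X ∈ LargeStar θ n) : X.Nonempty := by
  cases n with
  | zero => exact hX
  | succ n => exact hX.1

lemma isUpperSet_largeStar (n : ℕ) : IsUpperSet (LargeStar θ n) := by
  induction n with
  | zero => exact fun X Y hXY hX => Finset.Nonempty.mono hXY hX
  | succ n ih =>
    rintro X Y hXY ⟨hXne, hX⟩
    have hmin : minN Y ≤ minN X := minN_le (hXY (minN_mem hXne))
    have hsub : X.erase (minN X) ⊆ Y.erase (minN Y) := by
      intro w hw
      obtain ⟨hwX, hw⟩ := Finset.mem_erase.1 hw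
      have := minN_le hw
      exact Finset.mem_erase.2 ⟨by omega, hXY hw⟩
    exact ⟨hXne.mono hXY, ih.mulSeq _ hsub (mulSeq_replicate_mono subset_rfl hmin _ hX)⟩

end Products

section BlockUnion

variable {θ : ℕ → ℕ → ℕ → Prop} {k : ℕ} {X : Fin k → Finset ℕ} {S : Finset (Fin k)}

def maxes (X : Fin k → Finset ℕ) (S : Finset (Fin k)) : Finset ℕ :=
  S.image fun s => maxN (X s)

-- Dropping the members whose maximum is `min Z` puts the whole union above `min Z`.
noncomputable def blockUnion (X : Fin k → Finset ℕ) (S : Finset (Fin k)) (Z : Finset ℕ) :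
    Finset ℕ :=
  (S.filter fun s => maxN (X s) ∈ Z.erase (minN Z)).biUnion X

lemma mem_blockUnion {Z : Finset ℕ} {w : ℕ} :
    w ∈ blockUnion X S Z ↔ ∃ s ∈ S, maxN (X s) ∈ Z.erase (minN Z) ∧ w ∈ X s := by
  simp [blockUnion, and_assoc]

lemma lt_of_maxN_lt_maxN (hne : ∀ s, (X s).Nonempty)
    (hbelow : ∀ s t, s < t → SetBelow (X s) (X t)) {s t : Fin k}
    (h : maxN (X s) < maxN (X t)) : s < t := by
  by_contra! hts
  rcases hts.lt_or_eq with hts | rfl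
  · have := hbelow t s hts _ (maxN_mem (hne t)) _ (maxN_mem (hne s))
    omega
  · exact lt_irrefl _ h

lemma minN_lt_of_mem_blockUnion (hne : ∀ s, (X s).Nonempty)
    (hbelow : ∀ s t, s < t → SetBelow (X s) (X t)) {Z : Finset ℕ} (hZ : Z ⊆ maxes X S)
    {w : ℕ} (hw : w ∈ blockUnion X S Z) : minN Z < w := by
  obtain ⟨t, -, ht, hwt⟩ := mem_blockUnion.1 hw
  obtain ⟨htmin, htZ⟩ := Finset.mem_erase.1 ht
  obtain ⟨u, -, hu⟩ := Finset.mem_image.1 (hZ (minN_mem ⟨_, htZ⟩))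
  have hut : u < t := lt_of_maxN_lt_maxN hne hbelow <| by
    rw [hu]
    exact (minN_le htZ).lt_of_ne' htmin
  rw [← hu]
  exact hbelow u t hut _ (maxN_mem (hne u)) _ hwt

lemma blockUnion_mono {Z Z' : Finset ℕ} (h : Z ⊆ Z') :
    blockUnion X S Z ⊆ blockUnion X S Z' := by
  intro w hw
  obtain ⟨s, hs, hsZ, hws⟩ := mem_blockUnion.1 hw
  obtain ⟨hsmin, hsZ⟩ := Finset.mem_erase.1 hsZ
  have h₁ := minN_le (h (minN_mem ⟨_, hsZ⟩))
  have h₂ := minN_le hsZ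
  exact mem_blockUnion.2 ⟨s, hs, Finset.mem_erase.2 ⟨by omega, h hsZ⟩, hws⟩

lemma blockUnion_subset_biUnion (Z : Finset ℕ) : blockUnion X S Z ⊆ S.biUnion X :=
  Finset.biUnion_subset_biUnion_of_subset_left X (Finset.filter_subset _ _)

lemma maxN_blockUnion_le (Z : Finset ℕ) : maxN (blockUnion X S Z) ≤ maxN Z := by
  refine maxN_le fun w hw => ?_
  obtain ⟨s, -, hsZ, hws⟩ := mem_blockUnion.1 hw
  exact (le_maxN hws).trans (le_maxN (Finset.mem_of_mem_erase hsZ))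

lemma SetBelow.blockUnion (hne : ∀ s, (X s).Nonempty)
    (hbelow : ∀ s t, s < t → SetBelow (X s) (X t)) {Z₁ Z₂ : Finset ℕ}
    (h : SetBelow Z₁ Z₂) : SetBelow (blockUnion X S Z₁) (blockUnion X S Z₂) := by
  intro x hx y hy
  obtain ⟨s, -, hs, hxs⟩ := mem_blockUnion.1 hx
  obtain ⟨t, -, ht, hyt⟩ := mem_blockUnion.1 hy
  have hst := lt_of_maxN_lt_maxN hne hbelow
    (h _ (Finset.mem_of_mem_erase hs) _ (Finset.mem_of_mem_erase ht))
  exact hbelow s t hst _ hxs _ hyt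

lemma ThetaApart.blockUnion (hne : ∀ s, (X s).Nonempty)
    (hbelow : ∀ s t, s < t → SetBelow (X s) (X t)) {Z₁ Z₂ : Finset ℕ}
    (hZ₂ : Z₂ ⊆ maxes X S) (hne₂ : (blockUnion X S Z₂).Nonempty)
    (h : ThetaApart θ Z₁ Z₂) : ThetaApart θ (blockUnion X S Z₁) (blockUnion X S Z₂) := by
  intro x hx
  obtain ⟨y, hy, hθ⟩ := h x (hx.trans_le (maxN_blockUnion_le _))
  exact ⟨y, hy.trans (minN_lt_of_mem_blockUnion hne hbelow hZ₂ (minN_mem hne₂)),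
    fun z hz => hθ z (hz.trans_le (maxN_blockUnion_le _))⟩

lemma maxes_filter_eq_erase {Z : Finset ℕ} (hZ : Z ⊆ maxes X S) :
    maxes X (S.filter fun s => maxN (X s) ∈ Z.erase (minN Z)) = Z.erase (minN Z) := by
  ext x
  simp only [maxes, Finset.mem_image, Finset.mem_filter]
  constructor
  · rintro ⟨s, ⟨-, hs⟩, rfl⟩
    exact hs
  · intro hx
    obtain ⟨s, hs, rfl⟩ := Finset.mem_image.1 (hZ (Finset.mem_of_mem_erase hx))
    exact ⟨s, ⟨hs, hx⟩, rfl⟩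

lemma blockUnion_mem_mulSeq_replicate (hne : ∀ s, (X s).Nonempty)
    (horder : ∀ s t, s < t → SetBelow (X s) (X t) ∧ ThetaApart θ (X s) (X t))
    {L L' : Set (Finset ℕ)} (hL' : ∀ W ∈ L', W.Nonempty)
    (hleaf : ∀ W ∈ L, W ⊆ maxes X S → blockUnion X S W ∈ L')
    {m q : ℕ} (hm : 1 ≤ m) (hmq : m ≤ q) (r : ℕ) {Z : Finset ℕ} (hZ : Z ⊆ maxes X S)
    (hZL : Z ∈ MulSeq θ L (List.replicate r q)) :
    blockUnion X S Z ∈ MulSeq θ L' (List.replicate r m) := by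
  have hbelow s t hst := (horder s t hst).1
  induction r generalizing Z with
  | zero => exact hleaf Z hZL hZ
  | succ r ih =>
    rw [mulSeq_replicate_succ] at hZL ⊢
    obtain ⟨V, hV, hVZ, hVV⟩ := hZL
    have hVS i : V i ⊆ maxes X S := (hVZ i).trans hZ
    refine ⟨fun i => blockUnion X S (V (Fin.castLE hmq i)), fun i => ih (hVS _) (hV _),
      fun i => blockUnion_mono (hVZ _), fun i j hij => ?_⟩
    obtain ⟨hVij, hθ⟩ := hVV _ _ (show Fin.castLE hmq i < Fin.castLE hmq j from hij)
    exact ⟨hVij.blockUnion hne hbelow, hθ.blockUnion hne hbelow (hVS _)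
      (nonempty_of_mem_mulSeq_replicate hL' hm r (ih (hVS _) (hV _)))⟩

end BlockUnion

section Induction

variable {θ : ℕ → ℕ → ℕ → Prop} {k : ℕ} {X : Fin k → Finset ℕ} {S : Finset (Fin k)}
  {c n : ℕ}

lemma blockUnion_mem_largeStar
    (ih : ∀ S, maxes X S ∈ LargeStar θ c → S.biUnion X ∈ LargeStar θ n)
    {Z : Finset ℕ} (hZ : Z ⊆ maxes X S) (hZc : Z.erase (minN Z) ∈ LargeStar θ c) :
    blockUnion X S Z ∈ LargeStar θ n :=
  ih _ (by rwa [maxes_filter_eq_erase hZ])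

lemma blockUnion_mem_mulSeq_of_mem_largeStar_succ (hne : ∀ s, (X s).Nonempty)
    (horder : ∀ s t, s < t → SetBelow (X s) (X t) ∧ ThetaApart θ (X s) (X t))
    (ih : ∀ S, maxes X S ∈ LargeStar θ c → S.biUnion X ∈ LargeStar θ n)
    {m : ℕ} (hm : 2 ≤ m) (hmS : ∀ x ∈ maxes X S, m ≤ x) {d : ℕ} (hd : d ≤ c)
    {Z : Finset ℕ} (hZ : Z ⊆ maxes X S) (hZc : Z ∈ LargeStar θ (c + 1)) :
    blockUnion X S Z ∈ MulSeq θ (LargeStar θ n) (List.replicate d m) := by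
  obtain ⟨hZne, hZe⟩ := hZc
  have hmZ : m ≤ minN Z := hmS _ (hZ (minN_mem hZne))
  rw [show c + 1 = (c - d + 1) + d by omega, mulSeq_replicate_add] at hZe
  have hleaf : ∀ W ∈ MulSeq θ (LargeStar θ c) (List.replicate (c - d + 1) (minN Z)),
      W ⊆ maxes X S → blockUnion X S W ∈ LargeStar θ n := fun W hW hWS =>
    blockUnion_mem_largeStar ih hWS
      (erase_minN_mem_of_mem_mulSeq_replicate (isUpperSet_largeStar c) (by omega) hW)
  have hZ' := blockUnion_mem_mulSeq_replicate hne horder (fun _ => largeStar_nonempty) hleaf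
    (by omega) hmZ d ((Finset.erase_subset _ _).trans hZ) hZe
  exact (isUpperSet_largeStar n).mulSeq _ (blockUnion_mono (Finset.erase_subset _ _)) hZ'

theorem biUnion_mem_largeStar_succ (hne : ∀ s, (X s).Nonempty) (h2 : ∀ s, 2 ≤ minN (X s))
    (horder : ∀ s t, s < t → SetBelow (X s) (X t) ∧ ThetaApart θ (X s) (X t))
    (hn : n ≤ 2 * c + 1)
    (ih : ∀ S, maxes X S ∈ LargeStar θ c → S.biUnion X ∈ LargeStar θ n)
    (hM : maxes X S ∈ LargeStar θ (c + 2)) : S.biUnion X ∈ LargeStar θ (n + 1) := by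
  set M := maxes X S
  set U := S.biUnion X
  obtain ⟨hMne, hMe⟩ := hM
  obtain ⟨u, hu, -⟩ := Finset.mem_image.1 (minN_mem hMne)
  have hUne : U.Nonempty := (hne u).mono (Finset.subset_biUnion_of_mem X hu)
  have hm : 2 ≤ minN U := by
    obtain ⟨t, -, ht⟩ := Finset.mem_biUnion.1 (minN_mem hUne)
    exact (h2 t).trans (minN_le ht)
  have hmM : ∀ x ∈ M, minN U ≤ x := by
    intro x hx
    obtain ⟨s, hs, rfl⟩ := Finset.mem_image.1 hx
    exact minN_le (Finset.mem_biUnion.2 ⟨s, hs, maxN_mem (hne s)⟩)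
  have hmμ := hmM _ (minN_mem hMne)
  -- `d` levels come from `M ∖ {min M}` itself, the other `n + 1 - d ≤ c` from its leaves.
  obtain ⟨d, hdc, hdn, hd⟩ : ∃ d, d ≤ c + 2 ∧ d ≤ n + 1 ∧ n + 1 - d ≤ c :=
    ⟨min (n + 1) (c + 2), by omega, by omega, by omega⟩
  rw [show c + 2 = (c + 2 - d) + d by omega, mulSeq_replicate_add] at hMe
  have hleaf : ∀ W ∈ MulSeq θ (LargeStar θ (c + 1)) (List.replicate (c + 2 - d) (minN M)),
      W ⊆ M → blockUnion X S W ∈ MulSeq θ (LargeStar θ n) (List.replicate (n + 1 - d) (minN U)) :=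
    fun W hW hWM => blockUnion_mem_mulSeq_of_mem_largeStar_succ hne horder ih hm hmM hd hWM
      (mulSeq_replicate_subset (isUpperSet_largeStar _) (by omega) _ hW)
  have hbu := blockUnion_mem_mulSeq_replicate hne horder
    (fun _ => nonempty_of_mem_mulSeq_replicate (fun _ => largeStar_nonempty) (by omega) _) hleaf
    (by omega) hmμ d (Finset.erase_subset _ _) hMe
  rw [← mulSeq_replicate_add, show n + 1 - d + d = n + 1 by omega] at hbu
  refine ⟨hUne, (isUpperSet_largeStar n).mulSeq _ (fun w hw => ?_) hbu⟩
  have hw' := blockUnion_mono (Finset.erase_subset _ _) hw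
  have hμw : minN M < w :=
    minN_lt_of_mem_blockUnion hne (fun s t hst => (horder s t hst).1) subset_rfl hw'
  exact Finset.mem_erase.2 ⟨by omega, blockUnion_subset_biUnion _ hw'⟩

theorem biUnion_mem_largeStar {a : ℕ} (h2 : ∀ s, 2 ≤ minN (X s))
    (hlarge : ∀ s, X s ∈ LargeStar θ a)
    (horder : ∀ s t, s < t → SetBelow (X s) (X t) ∧ ThetaApart θ (X s) (X t)) (b : ℕ) :
    ∀ S, maxes X S ∈ LargeStar θ (a / 2 + 2 * b) → S.biUnion X ∈ LargeStar θ (a + b) := by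
  have hne s := largeStar_nonempty (hlarge s)
  induction b with
  | zero =>
    intro S hS
    obtain ⟨_, hx⟩ := largeStar_nonempty hS
    obtain ⟨s, hs, -⟩ := Finset.mem_image.1 hx
    exact isUpperSet_largeStar a (Finset.subset_biUnion_of_mem X hs) (hlarge s)
  | succ b ih =>
    intro S hS
    exact biUnion_mem_largeStar_succ (c := a / 2 + 2 * b) (n := a + b) hne h2 horder (by omega)
      ih hS

end Induction

/-- construction. -/
theorem stmt_1 (θ : ℕ → ℕ → ℕ → Prop) (a b k : ℕ) (X : Fin k → Finset ℕ)
    (h3 : ∀ s, 3 ≤ minN (X s))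
    (hlarge : ∀ s, X s ∈ LargeStar θ a)
    (horder : ∀ s t, s < t → SetBelow (X s) (X t) ∧ ThetaApart θ (X s) (X t))
    (hmax : (Finset.univ.image fun s => maxN (X s)) ∈ LargeStar θ (a / 2 + 2 * b)) :
    Finset.univ.biUnion X ∈ LargeStar θ (a + b) :=
  biUnion_mem_largeStar (fun s => (h3 s).trans' (by norm_num)) hlarge horder b _ hmax
end

section
/- Let θ be a ternary relation on ℕ, n ≥ 0 and k > 0. If a finite set X ⊆ ℕ is ω^{n+k}-large(θ), then X∖{min X} is ω^n·(min X, …, min X)-large(θ), where the product has k repetitions of min X. -/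
lemma lt_of_mem_erase_minN {X : Finset ℕ} {y : ℕ} (hy : y ∈ X.erase (minN X)) :
    minN X < y :=
  lt_of_le_of_ne (minN_le (Finset.mem_of_mem_erase hy)) (Ne.symm (Finset.ne_of_mem_erase hy))

lemma mulK_mono_le (θ : ℕ → ℕ → ℕ → Prop) (L : Set (Finset ℕ)) {m k : ℕ} (h : m ≤ k) :
    MulK θ L k ⊆ MulK θ L m := by
  rintro F ⟨Y, hL, hsub, hord⟩
  exact ⟨fun i => Y (Fin.castLE h i), fun i => hL _, fun i => hsub _,
    fun i j hij => hord _ _ (by simpa using hij)⟩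

lemma mulK_subset (θ : ℕ → ℕ → ℕ → Prop) (L : Set (Finset ℕ)) {k : ℕ} {F F' : Finset ℕ}
    (hFF : F ⊆ F') (hF : F ∈ MulK θ L k) : F' ∈ MulK θ L k := by
  obtain ⟨Y, hL, hsub, hord⟩ := hF
  exact ⟨Y, hL, fun i => (hsub i).trans hFF, hord⟩

lemma mulSeq_mono_on (θ : ℕ → ℕ → ℕ → Prop) (S : Finset ℕ) (τ : List ℕ) :
    ∀ L L' : Set (Finset ℕ), (∀ Y, Y ⊆ S → Y ∈ L → Y ∈ L') →
    ∀ F, F ⊆ S → F ∈ MulSeq θ L τ → F ∈ MulSeq θ L' τ := by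
  induction τ with
  | nil => exact fun L L' h F hFS hF => h F hFS hF
  | cons k τ ih =>
    intro L L' h F hFS hF
    refine ih (MulK θ L k) (MulK θ L' k) ?_ F hFS hF
    rintro Y hYS ⟨Z, hL, hsub, hord⟩
    exact ⟨Z, fun i => h _ ((hsub i).trans hYS) (hL i), hsub, hord⟩

/-- from ω^{n+k}-largeness(θ) to products. -/
theorem stmt_4 (θ : ℕ → ℕ → ℕ → Prop) (n k : ℕ) (hk : 0 < k)
    (X : Finset ℕ) (h3 : 3 ≤ minN X)
    (hX : X ∈ LargeTheta θ (n + k)) :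
    X.erase (minN X) ∈ MulSeq θ (LargeTheta θ n) (List.replicate k (minN X)) := by
  obtain ⟨k, rfl⟩ := Nat.exists_eq_add_of_lt hk
  clear hk
  simp only [Nat.zero_add] at hX ⊢
  induction k generalizing n with
  | zero => exact hX.2
  | succ k ih =>
    have hX' : X ∈ LargeTheta θ ((n + 1) + (k + 1)) := by
      have : n + (k + 1 + 1) = (n + 1) + (k + 1) := by ring
      rwa [this] at hX
    have h1 := ih (n + 1) hX'
    have key : X.erase (minN X) ∈
        MulSeq θ (MulK θ (LargeTheta θ n) (minN X)) (List.replicate (k + 1) (minN X)) := by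
      refine mulSeq_mono_on θ (X.erase (minN X)) _ _ _ ?_ _ (subset_refl _) h1
      intro Y hYS hY
      have hYne : Y.Nonempty := hY.1
      have hmin : minN X ≤ minN Y :=
        le_of_lt (lt_of_mem_erase_minN (hYS (minN_mem hYne)))
      exact mulK_mono_le θ _ hmin
        (mulK_subset θ _ (Finset.erase_subset _ _) hY.2)
    have : List.replicate (k + 1 + 1) (minN X) =
        minN X :: List.replicate (k + 1) (minN X) := rfl
    rw [this]
    exact key
end

section
/- There is a primitive recursive function B : ℕ³ → ℕ such that for all d ≥ 1 and ℓ, r ∈ ℕ: if T̄ = (T₀, …, T_{d−1}) is a strong d-forest of depth B(d,ℓ,r), then for every coloring g : Leaves(T₀) ∪ ⋯ ∪ Leaves(T_{d−1}) → {0,…,r−1} there exists S̄ = (S₀, …, S_{d−1}) ∈ Str^l_ℓ(T̄) such that for every i < d, g is constant on Leaves(S_i). -/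
/-- `(T, f, h)` witnesses a strong `d`-forest of depth `ℓ`: `h` is the level function
and `f i` maps the complete binary tree `2^{≤ℓ}` into `T i`, preserving levels and
the branching structure. -/
def IsStrongForest (d ℓ : ℕ) (T : Fin d → Finset (List Bool))
    (f : Fin d → List Bool → List Bool) (h : ℕ → ℕ) : Prop :=
  (∀ i : Fin d, ∀ σ : List Bool, σ.length ≤ ℓ →
    f i σ ∈ T i ∧ (f i σ).length = h σ.length) ∧
  (∀ i : Fin d, ∀ σ : List Bool, σ.length < ℓ → ∀ j : Bool,
    (f i σ ++ [j]) <+: f i (σ ++ [j]))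

/-- The leaves of the tree embedded by `f` at depth `ℓ`. -/
def Leaves (ℓ : ℕ) (f : List Bool → List Bool) : Set (List Bool) :=
  {t | ∃ σ : List Bool, σ.length = ℓ ∧ f σ = t}


/-!
A level-preserving embedding of the binary tree of depth `ℓ + 1` whose leaves are monochromatic
for a colouring with `k` colours is built recursively. Put `M := subtreeBound k ℓ` and
`a := k ^ 2 ^ M`. Each point `1^j 0^(a-j)` (`j ≤ a`) of a chain of length `a` induces a
colouring of the `2^M` strings of length `M` appended to it; there are at most `a` such
colourings, so two points `j₁ < j₂` induce the same one. The two strings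
`1^j₁ x^(j₂-j₁) 0^(a-j₂)` (`x : Bool`) branch right after `1^j₁`, and below them sits, by
induction, a monochromatic tree for the common induced colouring.

A forest is handled by colouring each string with the tuple of colours of its images in the
`d` trees (so `k = r ^ d`) and composing the resulting embedding with each tree.
-/

def subtreeBound (k : ℕ) : ℕ → ℕ
  | 0 => 0
  | ℓ + 1 => k ^ 2 ^ subtreeBound k ℓ + subtreeBound k ℓ

theorem subtreeBound_primrec : Primrec₂ subtreeBound := by
  have hpow : Primrec₂ (· ^ · : ℕ → ℕ → ℕ) := Primrec₂.unpaired'.1 Nat.Primrec.pow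
  have hstep : Primrec₂ fun (k : ℕ) (p : ℕ × ℕ) => k ^ 2 ^ p.2 + p.2 :=
    Primrec.nat_add.comp₂
      (hpow.comp₂ Primrec₂.left (hpow.comp₂ (Primrec₂.const 2) (Primrec.snd.comp₂ Primrec₂.right)))
      (Primrec.snd.comp₂ Primrec₂.right)
  refine (Primrec.nat_rec (Primrec.const 0) hstep).of_eq fun k ℓ => ?_
  induction ℓ with
  | zero => rfl
  | succ ℓ ih => simp only [subtreeBound, ← ih]

def IsStrongEmbedding (ℓ : ℕ) (e : List Bool → List Bool) (H : ℕ → ℕ) : Prop :=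
  (∀ σ : List Bool, σ.length ≤ ℓ → (e σ).length = H σ.length) ∧
  ∀ σ : List Bool, σ.length < ℓ → ∀ j : Bool, e σ ++ [j] <+: e (σ ++ [j])

namespace IsStrongEmbedding

variable {ℓ : ℕ} {e : List Bool → List Bool} {H : ℕ → ℕ}

theorem prefix_append (he : IsStrongEmbedding ℓ e H) (σ ρ : List Bool)
    (hlen : (σ ++ ρ).length ≤ ℓ) : e σ <+: e (σ ++ ρ) := by
  induction ρ using List.reverseRecOn with
  | nil => simp
  | append_singleton ρ j ih =>
    simp only [List.length_append, List.length_singleton] at hlen ih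
    rw [← List.append_assoc]
    exact (ih (by omega)).trans <| (List.prefix_append _ _).trans <|
      he.2 _ (by simp only [List.length_append]; omega) j

theorem prefix_of_prefix (he : IsStrongEmbedding ℓ e H) {σ τ : List Bool} (hστ : σ <+: τ)
    (hτ : τ.length ≤ ℓ) : e σ <+: e τ := by
  obtain ⟨ρ, rfl⟩ := hστ
  exact he.prefix_append σ ρ hτ

theorem length_le (he : IsStrongEmbedding ℓ e H) {σ : List Bool} (hσ : σ.length ≤ ℓ) :
    (e σ).length ≤ H ℓ := by
  have hlen : (σ ++ List.replicate (ℓ - σ.length) false).length = ℓ := by simp; omega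
  calc (e σ).length
      ≤ (e (σ ++ List.replicate (ℓ - σ.length) false)).length :=
        (he.prefix_append _ _ hlen.le).length_le
    _ = H ℓ := by rw [he.1 _ hlen.le, hlen]

theorem comp {N : ℕ} {f : List Bool → List Bool} {h : ℕ → ℕ} (hf : IsStrongEmbedding N f h)
    (he : IsStrongEmbedding ℓ e H) (hH : H ℓ = N) : IsStrongEmbedding ℓ (f ∘ e) (h ∘ H) := by
  refine ⟨fun σ hσ => ?_, fun σ hσ j => ?_⟩
  · rw [Function.comp_apply, hf.1 _ (hH ▸ he.length_le hσ), he.1 σ hσ, Function.comp_apply]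
  · have hchild : (σ ++ [j]).length ≤ ℓ := by simp; omega
    have hlong : (e (σ ++ [j])).length ≤ N := hH ▸ he.length_le hchild
    have hshort : (e σ).length < N := by
      have := (he.2 σ hσ j).length_le
      simp only [List.length_append, List.length_singleton] at this
      omega
    exact (hf.2 _ hshort j).trans (hf.prefix_of_prefix (he.2 σ hσ j) hlong)

end IsStrongEmbedding

theorem IsStrongForest.isStrongEmbedding {d N : ℕ} {T : Fin d → Finset (List Bool)}
    {f : Fin d → List Bool → List Bool} {h : ℕ → ℕ} (hF : IsStrongForest d N T f h) (i : Fin d) :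
    IsStrongEmbedding N (f i) h :=
  ⟨fun σ hσ => (hF.1 i σ hσ).2, hF.2 i⟩

open Classical in
theorem IsStrongForest.comp {d N ℓ : ℕ} {T : Fin d → Finset (List Bool)}
    {f : Fin d → List Bool → List Bool} {h : ℕ → ℕ} {e : List Bool → List Bool} {H : ℕ → ℕ}
    (hF : IsStrongForest d N T f h) (he : IsStrongEmbedding ℓ e H) (hH : H ℓ = N) :
    IsStrongForest d ℓ (fun i => {t ∈ T i | ∃ σ : List Bool, σ.length ≤ ℓ ∧ f i (e σ) = t})
      (fun i => f i ∘ e) (h ∘ H) := by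
  refine ⟨fun i σ hσ => ⟨?_, ((hF.isStrongEmbedding i).comp he hH).1 σ hσ⟩,
    fun i => ((hF.isStrongEmbedding i).comp he hH).2⟩
  exact Finset.mem_filter.2 ⟨(hF.1 i _ (hH ▸ he.length_le hσ)).1, σ, hσ, rfl⟩

theorem leaves_comp_subset {ℓ N : ℕ} {e f : List Bool → List Bool} {H : ℕ → ℕ}
    (he : IsStrongEmbedding ℓ e H) (hH : H ℓ = N) : Leaves ℓ (f ∘ e) ⊆ Leaves N f := by
  rintro _ ⟨σ, hσ, rfl⟩
  exact ⟨e σ, by rw [he.1 σ hσ.le, hσ, hH], rfl⟩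

def chainPoint (a j : ℕ) : List Bool :=
  List.replicate j true ++ List.replicate (a - j) false

theorem exists_chainPoint_color_eq {γ : Type*} [Fintype γ] {k : ℕ} (hk : Fintype.card γ ≤ k)
    (M : ℕ) (c : List Bool → γ) :
    ∃ j₁ j₂ : ℕ, j₁ < j₂ ∧ j₂ ≤ k ^ 2 ^ M ∧ ∀ τ : List Bool, τ.length = M →
      c (chainPoint (k ^ 2 ^ M) j₁ ++ τ) = c (chainPoint (k ^ 2 ^ M) j₂ ++ τ) := by
  let induced (j : ℕ) (v : List.Vector Bool M) : γ := c (chainPoint (k ^ 2 ^ M) j ++ v.toList)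
  have hcard : (Finset.univ : Finset (List.Vector Bool M → γ)).card
      < (Finset.range (k ^ 2 ^ M + 1)).card := by
    rw [Finset.card_univ, Fintype.card_fun, card_vector, Fintype.card_bool, Finset.card_range]
    exact Nat.lt_succ_of_le (Nat.pow_le_pow_left hk _)
  obtain ⟨x, hx, y, hy, hne, hxy⟩ :=
    Finset.exists_ne_map_eq_of_card_lt_of_maps_to hcard (f := induced) fun _ _ => by simp
  rw [Finset.mem_range, Nat.lt_succ_iff] at hx hy
  rcases hne.lt_or_gt with hlt | hlt
  · exact ⟨x, y, hlt, hy, fun τ hτ => congrFun hxy ⟨τ, hτ⟩⟩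
  · exact ⟨y, x, hlt, hx, fun τ hτ => (congrFun hxy ⟨τ, hτ⟩).symm⟩

def chainLine (a j₁ j₂ : ℕ) (x : Bool) : List Bool :=
  List.replicate j₁ true ++ (List.replicate (j₂ - j₁) x ++ List.replicate (a - j₂) false)

section chainLine

variable {a j₁ j₂ : ℕ}

theorem length_chainLine (h₁₂ : j₁ ≤ j₂) (h₂ : j₂ ≤ a) (x : Bool) :
    (chainLine a j₁ j₂ x).length = a := by
  simp only [chainLine, List.length_append, List.length_replicate]
  omega

theorem chainLine_false (h₁₂ : j₁ ≤ j₂) (h₂ : j₂ ≤ a) :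
    chainLine a j₁ j₂ false = chainPoint a j₁ := by
  rw [chainLine, chainPoint, List.replicate_append_replicate]
  congr 2
  omega

theorem chainLine_true (h₁₂ : j₁ ≤ j₂) : chainLine a j₁ j₂ true = chainPoint a j₂ := by
  rw [chainLine, chainPoint, ← List.append_assoc, List.replicate_append_replicate]
  congr 2
  omega

theorem replicate_append_prefix_chainLine (h₁₂ : j₁ < j₂) (x : Bool) :
    List.replicate j₁ true ++ [x] <+: chainLine a j₁ j₂ x := by
  refine ⟨List.replicate (j₂ - j₁ - 1) x ++ List.replicate (a - j₂) false, ?_⟩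
  rw [chainLine, show j₂ - j₁ = j₂ - j₁ - 1 + 1 by omega, List.replicate_succ]
  simp

end chainLine

def lineEmbedding (a j₁ j₂ : ℕ) (e : List Bool → List Bool) : List Bool → List Bool
  | [] => List.replicate j₁ true
  | x :: ρ => chainLine a j₁ j₂ x ++ e ρ

def lineLevel (a j₁ : ℕ) (H : ℕ → ℕ) : ℕ → ℕ
  | 0 => j₁
  | n + 1 => a + H n

theorem isStrongEmbedding_lineEmbedding {ℓ a j₁ j₂ : ℕ} {e : List Bool → List Bool}
    {H : ℕ → ℕ} (he : IsStrongEmbedding ℓ e H) (h₁₂ : j₁ < j₂) (h₂ : j₂ ≤ a) :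
    IsStrongEmbedding (ℓ + 1) (lineEmbedding a j₁ j₂ e) (lineLevel a j₁ H) := by
  refine ⟨fun σ hσ => ?_, fun σ hσ j => ?_⟩
  · cases σ with
    | nil => simp [lineEmbedding, lineLevel]
    | cons x ρ =>
      simp only [List.length_cons, Nat.add_le_add_iff_right] at hσ
      simp only [lineEmbedding, lineLevel, List.length_append, List.length_cons,
        length_chainLine h₁₂.le h₂, he.1 ρ hσ]
  · cases σ with
    | nil =>
      exact (replicate_append_prefix_chainLine h₁₂ j).trans (List.prefix_append _ _)
    | cons x ρ =>
      simp only [List.length_cons, Nat.add_lt_add_iff_right] at hσ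
      simp only [lineEmbedding, List.cons_append, List.append_assoc]
      exact (List.prefix_append_right_inj _).2 (he.2 ρ hσ j)

theorem exists_isStrongEmbedding_leaf_color_eq {γ : Type*} [Fintype γ] {k : ℕ}
    (hk : Fintype.card γ ≤ k) (ℓ : ℕ) (c : List Bool → γ) :
    ∃ (e : List Bool → List Bool) (H : ℕ → ℕ), IsStrongEmbedding ℓ e H ∧
      H ℓ = subtreeBound k ℓ ∧
      ∀ σ τ : List Bool, σ.length = ℓ → τ.length = ℓ → c (e σ) = c (e τ) := by
  induction ℓ generalizing c with
  | zero =>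
    refine ⟨fun _ => [], fun _ => 0, ⟨fun _ _ => rfl, fun _ h => absurd h (Nat.not_lt_zero _)⟩,
      rfl, fun _ _ _ _ => rfl⟩
  | succ ℓ ih =>
    set a := k ^ 2 ^ subtreeBound k ℓ
    obtain ⟨j₁, j₂, h₁₂, h₂, hj⟩ := exists_chainPoint_color_eq hk (subtreeBound k ℓ) c
    obtain ⟨e, H, he, hH, hmono⟩ := ih fun τ => c (chainPoint a j₁ ++ τ)
    have hline : ∀ (x : Bool) (τ : List Bool), τ.length = subtreeBound k ℓ →
        c (chainLine a j₁ j₂ x ++ τ) = c (chainPoint a j₁ ++ τ) := by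
      intro x τ hτ
      cases x
      · rw [chainLine_false h₁₂.le h₂]
      · rw [chainLine_true h₁₂.le, hj τ hτ]
    refine ⟨lineEmbedding a j₁ j₂ e, lineLevel a j₁ H, isStrongEmbedding_lineEmbedding he h₁₂ h₂,
      by simp only [lineLevel, hH, subtreeBound, a], ?_⟩
    intro σ τ hσ hτ
    obtain ⟨x, σ, rfl⟩ := List.exists_cons_of_length_eq_add_one hσ
    obtain ⟨y, τ, rfl⟩ := List.exists_cons_of_length_eq_add_one hτ
    rw [List.length_cons, Nat.add_right_cancel_iff] at hσ hτ
    have hleaf : ∀ ρ : List Bool, ρ.length = ℓ → (e ρ).length = subtreeBound k ℓ :=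
      fun ρ hρ => by rw [he.1 ρ hρ.le, hρ, hH]
    simp only [lineEmbedding, hline x _ (hleaf σ hσ), hline y _ (hleaf τ hτ)]
    exact hmono σ τ hσ hτ

/-- homogenization of a coloring of leaves of a strong `d`-forest. -/
theorem stmt_12 :
    ∃ B : ℕ → ℕ → ℕ → ℕ,
      Nat.Primrec (fun c : ℕ => B c.unpair.1 c.unpair.2.unpair.1 c.unpair.2.unpair.2) ∧
      ∀ d : ℕ, 1 ≤ d → ∀ ℓ r : ℕ,
        ∀ (T : Fin d → Finset (List Bool)) (f : Fin d → List Bool → List Bool) (h : ℕ → ℕ),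
          IsStrongForest d (B d ℓ r) T f h →
          ∀ g : List Bool → ℕ,
            (∀ i : Fin d, ∀ t ∈ Leaves (B d ℓ r) (f i), g t < r) →
            ∃ (S : Fin d → Finset (List Bool)) (fS : Fin d → List Bool → List Bool)
              (hS : ℕ → ℕ),
              IsStrongForest d ℓ S fS hS ∧
              (∀ i : Fin d, Leaves ℓ (fS i) ⊆ Leaves (B d ℓ r) (f i)) ∧
              ∀ i : Fin d, ∀ s ∈ Leaves ℓ (fS i), ∀ t ∈ Leaves ℓ (fS i), g s = g t := by
  refine ⟨fun d ℓ r => subtreeBound (r ^ d) ℓ, ?_, ?_⟩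
  · have hunpair₂ : Primrec fun c : ℕ => c.unpair.2.unpair :=
      Primrec.unpair.comp (Primrec.snd.comp Primrec.unpair)
    exact Primrec.nat_iff.1 <| subtreeBound_primrec.comp
      ((Primrec₂.unpaired'.1 Nat.Primrec.pow).comp (Primrec.snd.comp hunpair₂)
        (Primrec.fst.comp Primrec.unpair))
      (Primrec.fst.comp hunpair₂)
  intro d hd ℓ r T f h hF g hg
  have hr : 0 < r := (Nat.zero_le _).trans_lt
    (hg ⟨0, hd⟩ _ ⟨List.replicate (subtreeBound (r ^ d) ℓ) false, List.length_replicate, rfl⟩)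
  obtain ⟨e, H, he, hH, hmono⟩ := exists_isStrongEmbedding_leaf_color_eq (k := r ^ d)
    (γ := Fin d → Fin r) (by simp) ℓ fun τ i => ⟨g (f i τ) % r, Nat.mod_lt _ hr⟩
  refine ⟨_, fun i => f i ∘ e, h ∘ H, hF.comp he hH, fun i => leaves_comp_subset he hH, ?_⟩
  rintro i _ ⟨σ, hσ, rfl⟩ _ ⟨τ, hτ, rfl⟩
  have hmod : g (f i (e σ)) % r = g (f i (e τ)) % r :=
    congrArg Fin.val (congrFun (hmono σ τ hσ hτ) i)
  have hleaf (ρ : List Bool) (hρ : ρ.length = ℓ) : g (f i (e ρ)) < r :=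
    hg i _ (leaves_comp_subset he hH ⟨ρ, hρ, rfl⟩)
  rwa [Nat.mod_eq_of_lt (hleaf σ hσ), Nat.mod_eq_of_lt (hleaf τ hτ)] at hmod
end
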